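/- Continuity bound used in the achievability proof: for quantum states ω, τ on a Hilbert space H of dimension d, |H(ω) − H(τ)| ≤ (1/2)‖ω − τ‖₁ · log d + h((1/2)‖ω − τ‖₁) whenever (1/2)‖ω−τ‖₁ ≤ 1, where h is the binary entropy (Fannes–Audenaert inequality). -/

import Mathlib

open scoped Matrix ComplexOrder

noncomputable section
open Classical

namespace QD

variable {n : Type*} [Fintype n] [DecidableEq n]

/-- Apply a real function to a Hermitian matrix via its spectral decomposition;
junk value `0` on non-Hermitian input. -/
def mfun (f : ℝ → ℝ) (A : Matrix n n ℂ) : Matrix n n ℂ :=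
  if hA : A.IsHermitian then
    (hA.eigenvectorUnitary : Matrix n n ℂ) *
      Matrix.diagonal (fun i => (f (hA.eigenvalues i) : ℂ)) *
      (star (hA.eigenvectorUnitary : Matrix n n ℂ))
  else 0

/-- Matrix logarithm (base 2) taken on the support. -/
def mlog (A : Matrix n n ℂ) : Matrix n n ℂ := mfun (fun x => Real.logb 2 x) A

/-- Real power of a positive semidefinite matrix, taken on the support. -/
def mpow (A : Matrix n n ℂ) (c : ℝ) : Matrix n n ℂ :=
  mfun (fun x => if x = 0 then 0 else x ^ c) A

/-- Trace (Schatten-1) norm. -/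
def traceNorm (A : Matrix n n ℂ) : ℝ := ((mfun Real.sqrt (Aᴴ * A)).trace).re

/-- Fidelity `F(ρ,σ) = ‖√ρ√σ‖₁`. -/
def fid (ρ σ : Matrix n n ℂ) : ℝ := traceNorm (mfun Real.sqrt ρ * mfun Real.sqrt σ)

/-- Purified distance. -/
def purD (ρ σ : Matrix n n ℂ) : ℝ := Real.sqrt (1 - (fid ρ σ) ^ 2)

/-- Trace distance. -/
def trD (ρ σ : Matrix n n ℂ) : ℝ := traceNorm (ρ - σ) / 2

/-- `suppLE ρ σ` means `supp ρ ⊆ supp σ` (equivalently `ker σ ⊆ ker ρ` for PSD matrices). -/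
def suppLE (ρ σ : Matrix n n ℂ) : Prop := ∀ v : n → ℂ, σ.mulVec v = 0 → ρ.mulVec v = 0

/-- Umegaki relative entropy (base-2 logarithm), as a real number. -/
def relEnt (τ ρ : Matrix n n ℂ) : ℝ := ((τ * (mlog τ - mlog ρ)).trace).re

/-- Umegaki relative entropy with the value `⊤` when the support condition fails. -/
def relEntE (τ ρ : Matrix n n ℂ) : EReal :=
  if suppLE τ ρ then ((relEnt τ ρ : ℝ) : EReal) else ⊤

/-- von Neumann entropy (base-2 logarithm). -/
def vnEnt (τ : Matrix n n ℂ) : ℝ := -((τ * mlog τ).trace).re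

/-- The sandwiched Rényi quantity `Q*_α`. -/
def Qstar (α : ℝ) (ρ σ : Matrix n n ℂ) : ℝ :=
  ((mfun (fun x => if x = 0 then 0 else x ^ α)
      (mpow σ ((1 - α)/(2*α)) * ρ * mpow σ ((1 - α)/(2*α)))).trace).re

/-- The sandwiched Rényi divergence of order `α`. -/
def Dstar (α : ℝ) (ρ σ : Matrix n n ℂ) : ℝ := (α - 1)⁻¹ * Real.logb 2 (Qstar α ρ σ)

/-- The sandwiched Rényi divergence with the `+∞` conventions. -/
def DstarE (α : ℝ) (ρ σ : Matrix n n ℂ) : EReal :=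
  if (α < 1 ∧ 0 < Qstar α ρ σ) ∨ (1 < α ∧ suppLE ρ σ) ∨ α = 1 then
    ((Dstar α ρ σ : ℝ) : EReal) else ⊤

/-- The Petz Rényi divergence of order `β`. -/
def Dpetz (β : ℝ) (ρ σ : Matrix n n ℂ) : ℝ :=
  (β - 1)⁻¹ * Real.logb 2 (((mpow ρ β * mpow σ (1 - β)).trace).re)

/-- The log-Euclidean Rényi quantity `Q♭_α = Tr 2^{α log ρ + (1-α) log σ}`
(with supports handled via the Lie–Trotter limit). -/
def Qflat (α : ℝ) (ρ σ : Matrix n n ℂ) : ℝ :=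
  Filter.limUnder Filter.atTop
    (fun k : ℕ => (((mpow ρ (α / k) * mpow σ ((1 - α) / k)) ^ k).trace).re)

/-- The log-Euclidean Rényi divergence of order `α`. -/
def Dflat (α : ℝ) (ρ σ : Matrix n n ℂ) : ℝ := (α - 1)⁻¹ * Real.logb 2 (Qflat α ρ σ)

/-- The log-Euclidean Rényi divergence with the `+∞` convention. -/
def DflatE (α : ℝ) (ρ σ : Matrix n n ℂ) : EReal :=
  if 0 < Qflat α ρ σ then ((Dflat α ρ σ : ℝ) : EReal) else ⊤

/-- The pinching channel associated with (the spectral projections of) `σ`. -/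
def pinch (σ X : Matrix n n ℂ) : Matrix n n ℂ :=
  if hσ : σ.IsHermitian then
    ∑ lam ∈ Finset.univ.image hσ.eigenvalues,
      mfun (fun x => if x = lam then 1 else 0) σ * X *
        mfun (fun x => if x = lam then 1 else 0) σ
  else X

/-- The number of distinct eigenvalues `v(σ)`. -/
def numEig (σ : Matrix n n ℂ) : ℕ :=
  if hσ : σ.IsHermitian then (Finset.univ.image hσ.eigenvalues).card else 1

/-- Trace of the positive part of a Hermitian matrix. -/
def posPartTrace (A : Matrix n n ℂ) : ℝ := ((mfun (fun x => max x 0) A).trace).re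

/-- Binary entropy (base 2). -/
def binEnt (x : ℝ) : ℝ := -(x * Real.logb 2 x) - (1 - x) * Real.logb 2 (1 - x)

/-- A quantum state: positive semidefinite with unit trace. -/
def IsState (ρ : Matrix n n ℂ) : Prop := ρ.PosSemidef ∧ ρ.trace = 1

end QD


/-!
Diagonalise `τ` and read off the diagonal `p` of `ω` in its eigenbasis. The matrix of squared
moduli of a unitary is doubly stochastic, so `p` is a doubly stochastic image of the spectrum
of `ω`, whence `H(ω) ≤ H(p)` by concavity of `η(x) = -x log x`, while `p - spec τ` is such an
image of the spectrum of `ω - τ`, whence `½ ∑ |p - spec τ| ≤ ½ ‖ω - τ‖₁`. This reduces the claim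
to distributions `p`, `q`.

Classically, put `m = min p q` of mass `1 - t`, so `t` is the total variation distance. From
`p = m + (p - m)`, subadditivity of `η` and the grouping bound give
`H(p) ≤ H(m) + η(t) + t log d`, and concavity of `η` gives `H(m) ≤ H(q) + η(1 - t)`; together,
`H(p) - H(q) ≤ t log d + h(t)`. Since `x ↦ x log d + h(x)` is concave and equals
`log d ≥ H(p) - H(q)` at `x = 1`, the bound persists for every `T ∈ [t, 1]`.
-/

open Real Finset Matrix

namespace Real

lemma negMulLog_add_le {x y : ℝ} (hx : 0 ≤ x) (hy : 0 ≤ y) :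
    negMulLog (x + y) ≤ negMulLog x + negMulLog y := by
  have hterm {a b : ℝ} (ha : 0 ≤ a) (hb : 0 ≤ b) : -(a * log (a + b)) ≤ negMulLog a := by
    rcases ha.eq_or_lt with rfl | ha
    · simp
    · rw [negMulLog, neg_mul, neg_le_neg_iff]
      exact mul_le_mul_of_nonneg_left (log_le_log ha (by linarith)) ha.le
  have h₁ := hterm hx hy
  have h₂ := hterm hy hx
  rw [add_comm y x] at h₂
  rw [negMulLog, neg_mul, add_mul, neg_add]
  linarith

lemma negMulLog_add_mul_log_le {s m b : ℝ} (hs : 0 < s) (hm : 0 ≤ m) (hb : 0 ≤ b)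
    (hbs : b ≤ 1 - s) : negMulLog m + m * log s ≤ negMulLog (m + b) := by
  have ht : 0 ≤ 1 - s := hb.trans hbs
  have hscale : negMulLog m + m * log s = s * negMulLog (m / s) := by
    have := negMulLog_mul s (m / s)
    rw [mul_div_cancel₀ m hs.ne'] at this
    rw [this, negMulLog]
    field_simp
    ring
  have hb' : (1 - s) * (b / (1 - s)) = b := by
    rcases ht.eq_or_lt with h | h
    · rw [← h] at hbs ⊢; simp [le_antisymm hbs hb]
    · exact mul_div_cancel₀ b h.ne'
  have hconc := concaveOn_negMulLog.2 (Set.mem_Ici.2 (div_nonneg hm hs.le))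
    (Set.mem_Ici.2 (div_nonneg hb ht)) hs.le ht (add_sub_cancel s 1)
  simp only [smul_eq_mul, mul_div_cancel₀ m hs.ne', hb'] at hconc
  have := mul_nonneg ht (negMulLog_nonneg (div_nonneg hb ht) (div_le_one_of_le₀ hbs ht))
  linarith

end Real

namespace Matrix

variable {n : Type*} [Fintype n] [DecidableEq n]

lemma mul_diagonal_mul_conjTranspose_apply_self (W : Matrix n n ℂ) (c : n → ℝ) (i : n) :
    (W * diagonal (fun j => (c j : ℂ)) * Wᴴ) i i =
      ((of fun i j => Complex.normSq (W i j)) *ᵥ c) i := by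
  rw [mul_apply]
  simp only [mul_diagonal, conjTranspose_apply, RCLike.star_def, mulVec, dotProduct,
    of_apply, Complex.ofReal_sum, Complex.ofReal_mul, Complex.normSq_eq_conj_mul_self]
  refine Finset.sum_congr rfl fun j _ => by ring

lemma normSq_mem_doublyStochastic (W : unitaryGroup n ℂ) :
    (of fun i j => Complex.normSq ((W : Matrix n n ℂ) i j)) ∈ doublyStochastic ℝ n := by
  rw [mem_doublyStochastic_iff_sum]
  refine ⟨fun i j => Complex.normSq_nonneg _, fun i => ?_, fun j => ?_⟩
  · have := congr_fun₂ (mem_unitaryGroup_iff.1 W.2) i i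
    simp only [mul_apply, star_apply, RCLike.star_def, Complex.mul_conj, one_apply_eq] at this
    exact_mod_cast this
  · have := congr_fun₂ (mem_unitaryGroup_iff'.1 W.2) j j
    simp only [mul_apply, star_apply, RCLike.star_def, mul_comm (starRingEnd ℂ _),
      Complex.mul_conj, one_apply_eq] at this
    exact_mod_cast this

lemma mulVec_mem_stdSimplex {M : Matrix n n ℝ} (hM : M ∈ colStochastic ℝ n)
    {x : n → ℝ} (hx : x ∈ stdSimplex ℝ n) : M *ᵥ x ∈ stdSimplex ℝ n :=
  ⟨nonneg_mulVec_of_mem_colStochastic hM hx.1, (sum_mulVec_of_mem_colStochastic hM).trans hx.2⟩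

lemma sum_abs_mulVec_le {M : Matrix n n ℝ} (hM : M ∈ colStochastic ℝ n)
    (x : n → ℝ) : ∑ i, |(M *ᵥ x) i| ≤ ∑ i, |x i| := calc
  ∑ i, |(M *ᵥ x) i| ≤ ∑ i, ∑ j, M i j * |x j| := sum_le_sum fun i _ =>
      (abs_sum_le_sum_abs _ _).trans_eq <| sum_congr rfl fun j _ => by
        rw [abs_mul, abs_of_nonneg (nonneg_of_mem_colStochastic hM)]
  _ = ∑ j, |x j| := by
      rw [sum_comm]
      simp [← sum_mul, sum_col_of_mem_colStochastic hM]

lemma continuousOn_real_spectrum (f : ℝ → ℝ) (A : Matrix n n ℂ) :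
    ContinuousOn f (spectrum ℝ A) :=
  A.finite_real_spectrum.continuousOn f

lemma IsHermitian.trace_cfc (f : ℝ → ℝ) {A : Matrix n n ℂ} (hA : A.IsHermitian) :
    (cfc f A).trace = ∑ i, (f (hA.eigenvalues i) : ℂ) := by
  rw [hA.cfc_eq, IsHermitian.cfc, Unitary.conjStarAlgAut_apply, trace_mul_cycle,
    Unitary.coe_star_mul_self, one_mul, trace_diagonal]
  rfl

end Matrix

lemma ConcaveOn.sum_le_sum_mulVec {n : Type*} [Fintype n] [DecidableEq n] {s : Set ℝ}
    {f : ℝ → ℝ} (hf : ConcaveOn ℝ s f) {M : Matrix n n ℝ} (hM : M ∈ doublyStochastic ℝ n)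
    {x : n → ℝ} (hx : ∀ i, x i ∈ s) :
    ∑ i, f (x i) ≤ ∑ i, f ((M *ᵥ x) i) := calc
  ∑ j, f (x j) = ∑ i, ∑ j, M i j • f (x j) := by
      rw [sum_comm]
      simp [← sum_mul, sum_col_of_mem_doublyStochastic hM]
  _ ≤ ∑ i, f (∑ j, M i j • x j) := sum_le_sum fun i _ =>
      hf.le_map_sum (fun j _ => nonneg_of_mem_doublyStochastic hM)
        (sum_row_of_mem_doublyStochastic hM i) (fun j _ => hx j)
  _ = ∑ i, f ((M *ᵥ x) i) := rfl

namespace QD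

section Classical

variable {ι : Type*} [Fintype ι]

def shannonEntropy (p : ι → ℝ) : ℝ := ∑ i, negMulLog (p i)

lemma shannonEntropy_nonneg {p : ι → ℝ} (hp : p ∈ stdSimplex ℝ ι) : 0 ≤ shannonEntropy p :=
  sum_nonneg fun i _ => negMulLog_nonneg (hp.1 i)
    (hp.2 ▸ single_le_sum (fun j _ => hp.1 j) (mem_univ i))

lemma shannonEntropy_le_negMulLog_sum_add {p : ι → ℝ} (hp : ∀ i, 0 ≤ p i) :
    shannonEntropy p ≤ negMulLog (∑ i, p i) + (∑ i, p i) * log (Fintype.card ι) := by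
  rcases isEmpty_or_nonempty ι with hι | hι
  · simp [shannonEntropy]
  set d : ℝ := (Fintype.card ι : ℝ)
  have hd : 0 < d := by simp [d, Fintype.card_pos]
  have hJensen := concaveOn_negMulLog.le_map_sum (t := univ) (w := fun _ => d⁻¹)
    (fun _ _ => by positivity) (by simp [d]) (fun i _ => hp i)
  have hinv : negMulLog d⁻¹ = d⁻¹ * log d := by simp [negMulLog, log_inv]
  simp only [smul_eq_mul, ← mul_sum, negMulLog_mul, hinv] at hJensen
  have := mul_le_mul_of_nonneg_left hJensen hd.le
  rw [shannonEntropy]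
  field_simp at this
  linarith

lemma shannonEntropy_le_log_card {p : ι → ℝ} (hp : p ∈ stdSimplex ℝ ι) :
    shannonEntropy p ≤ log (Fintype.card ι) := by
  simpa [hp.2] using shannonEntropy_le_negMulLog_sum_add hp.1

lemma shannonEntropy_le_add_negMulLog_of_le {m q : ι → ℝ} (hm : ∀ i, 0 ≤ m i)
    (hmq : ∀ i, m i ≤ q i) (hq : q ∈ stdSimplex ℝ ι) :
    shannonEntropy m ≤ shannonEntropy q + negMulLog (∑ i, m i) := by
  rcases (sum_nonneg fun i _ => hm i : 0 ≤ ∑ i, m i).eq_or_lt with hs | hs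
  · have hm0 : ∀ i, m i = 0 := fun i =>
      (sum_eq_zero_iff_of_nonneg fun j _ => hm j).1 hs.symm i (mem_univ i)
    simpa [shannonEntropy, hm0] using shannonEntropy_nonneg hq
  have hgap : ∀ i, q i - m i ≤ 1 - ∑ j, m j := fun i => by
    rw [← hq.2, ← sum_sub_distrib]
    exact single_le_sum (fun j _ => sub_nonneg.2 (hmq j)) (mem_univ i)
  have hpoint : ∀ i, negMulLog (m i) + m i * log (∑ j, m j) ≤ negMulLog (q i) := fun i => by
    simpa using negMulLog_add_mul_log_le hs (hm i) (sub_nonneg.2 (hmq i)) (hgap i)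
  have := sum_le_sum fun i (_ : i ∈ univ) => hpoint i
  rw [sum_add_distrib, ← sum_mul] at this
  rw [shannonEntropy, shannonEntropy, negMulLog]
  linarith

lemma sum_abs_sub_div_two_eq {p q : ι → ℝ} (hp : p ∈ stdSimplex ℝ ι) (hq : q ∈ stdSimplex ℝ ι) :
    (∑ i, |p i - q i|) / 2 = 1 - ∑ i, min (p i) (q i) := by
  have habs : ∀ i, |p i - q i| = p i + q i - 2 * min (p i) (q i) := fun i => by
    rcases le_total (p i) (q i) with h | h
    · rw [abs_of_nonpos (by linarith), min_eq_left h]; ring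
    · rw [abs_of_nonneg (by linarith), min_eq_right h]; ring
  simp only [habs, sum_sub_distrib, sum_add_distrib, hp.2, hq.2, ← mul_sum]
  ring

lemma shannonEntropy_sub_le_of_sum_min {p q : ι → ℝ} (hp : p ∈ stdSimplex ℝ ι)
    (hq : q ∈ stdSimplex ℝ ι) :
    shannonEntropy p - shannonEntropy q ≤
      (1 - ∑ i, min (p i) (q i)) * log (Fintype.card ι)
        + binEntropy (1 - ∑ i, min (p i) (q i)) := by
  set m : ι → ℝ := fun i => min (p i) (q i)
  have hm : ∀ i, 0 ≤ m i := fun i => le_min (hp.1 i) (hq.1 i)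
  have hpm : ∀ i, 0 ≤ p i - m i := fun i => sub_nonneg.2 (min_le_left _ _)
  have hsplit : shannonEntropy p ≤ shannonEntropy m + shannonEntropy fun i => p i - m i := by
    rw [shannonEntropy, shannonEntropy, shannonEntropy, ← sum_add_distrib]
    refine sum_le_sum fun i _ => ?_
    simpa using negMulLog_add_le (hm i) (hpm i)
  have hcommon := shannonEntropy_le_add_negMulLog_of_le hm (fun i => min_le_right _ _) hq
  have hrest := shannonEntropy_le_negMulLog_sum_add hpm
  have hmass : ∑ i, (p i - m i) = 1 - ∑ i, m i := by rw [sum_sub_distrib, hp.2]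
  rw [hmass] at hrest
  rw [binEntropy_eq_negMulLog_add_negMulLog_one_sub, sub_sub_cancel]
  linarith

theorem shannonEntropy_sub_le {p q : ι → ℝ} (hp : p ∈ stdSimplex ℝ ι) (hq : q ∈ stdSimplex ℝ ι)
    {T : ℝ} (hT : (∑ i, |p i - q i|) / 2 ≤ T) (hT1 : T ≤ 1) :
    shannonEntropy p - shannonEntropy q ≤ T * log (Fintype.card ι) + binEntropy T := by
  set L := log (Fintype.card ι)
  set t := 1 - ∑ i, min (p i) (q i)
  have htv : (∑ i, |p i - q i|) / 2 = t := sum_abs_sub_div_two_eq hp hq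
  have ht : t ∈ Set.Icc (0 : ℝ) 1 := ⟨htv ▸ by positivity, (htv ▸ hT).trans hT1⟩
  have hconc : ConcaveOn ℝ (Set.Icc 0 1) fun x => x * L + binEntropy x :=
    ((LinearMap.mulRight ℝ L).concaveOn (convex_Icc 0 1)).add strictConcave_binEntropy.concaveOn
  have hmin := hconc.min_le_of_mem_Icc ht ⟨zero_le_one, le_rfl⟩ ⟨htv ▸ hT, hT1⟩
  have hat_t := shannonEntropy_sub_le_of_sum_min hp hq
  have hat_one : shannonEntropy p - shannonEntropy q ≤ 1 * L + binEntropy 1 := by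
    simp only [one_mul, binEntropy_one, add_zero]
    linarith [shannonEntropy_le_log_card hp, shannonEntropy_nonneg hq]
  exact (le_min hat_t hat_one).trans hmin

end Classical

lemma binEnt_eq_binEntropy_div (x : ℝ) : binEnt x = binEntropy x / log 2 := by
  simp only [binEnt, binEntropy_eq_negMulLog_add_negMulLog_one_sub, negMulLog, logb]
  ring

variable {n : Type*} [Fintype n]

def basisDiag (U A : Matrix n n ℂ) : n → ℝ := fun i => ((star U * A * U) i i).re

lemma basisDiag_sub (U A B : Matrix n n ℂ) :
    basisDiag U (A - B) = basisDiag U A - basisDiag U B := by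
  ext i
  simp [basisDiag, Matrix.mul_sub, Matrix.sub_mul]

variable [DecidableEq n]

lemma exists_basisDiag_eq_mulVec {A : Matrix n n ℂ} (hA : A.IsHermitian)
    (U : unitaryGroup n ℂ) :
    ∃ M ∈ doublyStochastic ℝ n, basisDiag (U : Matrix n n ℂ) A = M *ᵥ hA.eigenvalues := by
  set W : unitaryGroup n ℂ := star U * hA.eigenvectorUnitary
  refine ⟨_, normSq_mem_doublyStochastic W, funext fun i => ?_⟩
  have hconj : star (U : Matrix n n ℂ) * A * U
      = W * diagonal (fun j => (hA.eigenvalues j : ℂ)) * (W : Matrix n n ℂ)ᴴ := by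
    conv_lhs => rw [hA.spectral_theorem, Unitary.conjStarAlgAut_apply]
    simp [W, Matrix.mul_assoc, Function.comp_def, star_eq_conjTranspose]
  rw [basisDiag, hconj, mul_diagonal_mul_conjTranspose_apply_self, Complex.ofReal_re]

lemma mfun_eq_cfc (f : ℝ → ℝ) {A : Matrix n n ℂ} (hA : A.IsHermitian) : mfun f A = cfc f A := by
  rw [mfun, dif_pos hA, hA.cfc_eq, IsHermitian.cfc, Unitary.conjStarAlgAut_apply]
  rfl

lemma vnEnt_eq_shannonEntropy {A : Matrix n n ℂ} (hA : A.IsHermitian) :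
    vnEnt A = shannonEntropy hA.eigenvalues / log 2 := by
  have hprod : A * mlog A = cfc (fun x => x * logb 2 x) A := by
    rw [mlog, mfun_eq_cfc _ hA, cfc_mul _ _ A (continuousOn_real_spectrum _ A)
      (continuousOn_real_spectrum _ A), cfc_id' ℝ A]
  rw [vnEnt, hprod, hA.trace_cfc _, shannonEntropy, sum_div]
  simp only [← Complex.ofReal_sum, Complex.ofReal_re, ← sum_neg_distrib, negMulLog, logb]
  exact sum_congr rfl fun i _ => by ring

lemma traceNorm_eq_sum_abs {A : Matrix n n ℂ} (hA : A.IsHermitian) :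
    traceNorm A = ∑ i, |hA.eigenvalues i| := by
  have hsqH : (Aᴴ * A).IsHermitian := (posSemidef_conjTranspose_mul_self A).1
  have hsq : Aᴴ * A = A ^ 2 := by rw [hA.eq, sq]
  rw [traceNorm, mfun_eq_cfc _ hsqH, hsq, ← cfc_comp_pow _ 2 A, hA.trace_cfc _]
  simp [Real.sqrt_sq_eq_abs, ← Complex.ofReal_sum]

lemma basisDiag_eigenvectorUnitary {A : Matrix n n ℂ} (hA : A.IsHermitian) :
    basisDiag (hA.eigenvectorUnitary : Matrix n n ℂ) A = hA.eigenvalues := by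
  have hdiag := hA.conjStarAlgAut_star_eigenvectorUnitary
  rw [Unitary.conjStarAlgAut_apply, Unitary.coe_star, star_star] at hdiag
  funext i
  rw [basisDiag, hdiag, diagonal_apply_eq, Function.comp_apply]
  exact RCLike.ofReal_re (K := ℂ) _

lemma IsState.eigenvalues_mem_stdSimplex {ρ : Matrix n n ℂ} (hρ : IsState ρ) :
    hρ.1.1.eigenvalues ∈ stdSimplex ℝ n := by
  refine ⟨hρ.1.eigenvalues_nonneg, ?_⟩
  simpa using congrArg Complex.re (hρ.1.1.trace_eq_sum_eigenvalues.symm.trans hρ.2)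

lemma trD_comm (ω τ : Matrix n n ℂ) : trD τ ω = trD ω τ := by
  rw [trD, trD, traceNorm, traceNorm, ← neg_sub, conjTranspose_neg, Matrix.neg_mul,
    Matrix.mul_neg, neg_neg]

lemma vnEnt_sub_le {ω τ : Matrix n n ℂ} (hω : IsState ω) (hτ : IsState τ) (h : trD ω τ ≤ 1) :
    vnEnt ω - vnEnt τ ≤ trD ω τ * logb 2 (Fintype.card n) + binEnt (trD ω τ) := by
  have hωH : ω.IsHermitian := hω.1.1
  have hτH : τ.IsHermitian := hτ.1.1
  obtain ⟨M, hM, hp⟩ := exists_basisDiag_eq_mulVec hωH hτH.eigenvectorUnitary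
  obtain ⟨M', hM', hpq⟩ := exists_basisDiag_eq_mulVec (hωH.sub hτH) hτH.eigenvectorUnitary
  set p := basisDiag (hτH.eigenvectorUnitary : Matrix n n ℂ) ω
  have hpS : p ∈ stdSimplex ℝ n := hp ▸ mulVec_mem_stdSimplex
    (mem_doublyStochastic_iff_mem_rowStochastic_and_mem_colStochastic.1 hM).2
    hω.eigenvalues_mem_stdSimplex
  have hent : shannonEntropy hωH.eigenvalues ≤ shannonEntropy p :=
    hp ▸ concaveOn_negMulLog.sum_le_sum_mulVec hM fun i => hω.1.eigenvalues_nonneg i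
  have htv : (∑ i, |p i - hτH.eigenvalues i|) / 2 ≤ trD ω τ := by
    have := sum_abs_mulVec_le
      (mem_doublyStochastic_iff_mem_rowStochastic_and_mem_colStochastic.1 hM').2
      (hωH.sub hτH).eigenvalues
    rw [← hpq, basisDiag_sub, basisDiag_eigenvectorUnitary hτH] at this
    rw [trD, traceNorm_eq_sum_abs (hωH.sub hτH)]
    exact div_le_div_of_nonneg_right this zero_le_two
  have hclassical := shannonEntropy_sub_le hpS hτ.eigenvalues_mem_stdSimplex htv h
  rw [vnEnt_eq_shannonEntropy hωH, vnEnt_eq_shannonEntropy hτH, binEnt_eq_binEntropy_div, logb,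
    ← sub_div, mul_div_assoc', ← add_div]
  exact div_le_div_of_nonneg_right (by linarith) (log_nonneg one_le_two)

end QD

open QD Matrix in
/-- Fannes–Audenaert continuity bound
`|H(ω) - H(τ)| ≤ (1/2)‖ω-τ‖₁ log d + h((1/2)‖ω-τ‖₁)`. -/
theorem fannes_audenaert
    {n : Type*} [Fintype n] [DecidableEq n] (ω τ : Matrix n n ℂ)
    (hω : IsState ω) (hτ : IsState τ) (h : trD ω τ ≤ 1) :
    |vnEnt ω - vnEnt τ| ≤
      trD ω τ * Real.logb 2 (Fintype.card n) + binEnt (trD ω τ) := by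
  rw [abs_sub_le_iff]
  refine ⟨vnEnt_sub_le hω hτ h, ?_⟩
  rw [← trD_comm] at h ⊢
  exact vnEnt_sub_le hτ hω h
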